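/- Define F(x,x₁,x₂,ᾱ,β̄) = [βα₂x₂(α₁x₁ − α₂x) + αβ₁x₁(β₁x − β₂x₂)] / [βα₁(α₁x₁ − α₂x) + αβ₂(β₁x − β₂x₂)] and the map R_{ᾱ,β̄}(x₁,x₂,y₁,y₂) = (F(y₁,x₁,y₂,ᾱ,β̄), y₂, x₁, F(x₂,x₁,y₂,ᾱ,β̄)). Then R_{ᾱ,β̄} is a Poisson map with respect to the bracket {x₁,x₂} = −(α₁x₁ − α₂x₂)²/α, {y₁,y₂} = −(β₁y₁ − β₂y₂)²/β, {xᵢ,yⱼ} = 0: writing (u₁,u₂,v₁,v₂) for the image, one has {u₁,u₂} = −(α₁u₁ − α₂u₂)²/α, {v₁,v₂} = −(β₁v₁ − β₂v₂)²/β, and {uᵢ,vⱼ} = 0. -/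

import Mathlib

noncomputable def d1 (f : ℂ → ℂ → ℂ → ℂ → ℂ) (a b c d : ℂ) : ℂ :=
  deriv (fun t => f t b c d) a
noncomputable def d2 (f : ℂ → ℂ → ℂ → ℂ → ℂ) (a b c d : ℂ) : ℂ :=
  deriv (fun t => f a t c d) b
noncomputable def d3 (f : ℂ → ℂ → ℂ → ℂ → ℂ) (a b c d : ℂ) : ℂ :=
  deriv (fun t => f a b t d) c
noncomputable def d4 (f : ℂ → ℂ → ℂ → ℂ → ℂ) (a b c d : ℂ) : ℂ :=
  deriv (fun t => f a b c t) d

/-- Poisson bracket on ℂ⁴ with structure functions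
`J_x = −(α₁x₁−α₂x₂)²/α` and `J_y = −(β₁y₁−β₂y₂)²/β`. -/
noncomputable def pb (α α₁ α₂ β β₁ β₂ : ℂ) (f g : ℂ → ℂ → ℂ → ℂ → ℂ)
    (a b c d : ℂ) : ℂ :=
  (-(α₁ * a - α₂ * b) ^ 2 / α) *
    (d1 f a b c d * d2 g a b c d - d2 f a b c d * d1 g a b c d) +
  (-(β₁ * c - β₂ * d) ^ 2 / β) *
    (d3 f a b c d * d4 g a b c d - d4 f a b c d * d3 g a b c d)

/-- The function F of the multiparametric cross-ratio lift. -/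
noncomputable def Fcr (α α₁ α₂ β β₁ β₂ x x₁ x₂ : ℂ) : ℂ :=
  (β * α₂ * x₂ * (α₁ * x₁ - α₂ * x) + α * β₁ * x₁ * (β₁ * x - β₂ * x₂)) /
  (β * α₁ * (α₁ * x₁ - α₂ * x) + α * β₂ * (β₁ * x - β₂ * x₂))

/-!
`F` is a Möbius function of each of its three arguments. Writing `D` for its denominator and
`K = α₁β₁x₁ − α₂β₂x₂`, one finds `∂ₓF = αβK²/D²`, `α₁F − α₂x₂ = α(β₁x − β₂x₂)K/D` and
`β₁x₁ − β₂F = β(α₁x₁ − α₂x)K/D`; these give `{u₁,u₂}` and `{v₁,v₂}`. The mixed brackets other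
than `{u₁,v₂}` vanish because of which variables the functions depend on; in `{u₁,v₂}` the two
terms cancel because `∂_{x₁}F = αc(β₁x − β₂x₂)²/D²` and
`∂_{x₂}F = −βc(α₁x₁ − α₂x)²/D²` with the same `c = αβ₁β₂ − βα₁α₂`, while `K` takes
the same value at the two points where `F` is evaluated.
-/

theorem hasDerivAt_affine_div_affine {𝕜 : Type*} [NontriviallyNormedField 𝕜]
    {f : 𝕜 → 𝕜} {a b c d x : 𝕜} (hf : ∀ t, f t = (a * t + b) / (c * t + d))
    (hx : c * x + d ≠ 0) :
    HasDerivAt f ((a * d - b * c) / (c * x + d) ^ 2) x := by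
  rw [funext hf]
  have hnum : HasDerivAt (fun t => a * t + b) a x := by
    simpa using ((hasDerivAt_id x).const_mul a).add_const b
  have hden : HasDerivAt (fun t => c * t + d) c x := by
    simpa using ((hasDerivAt_id x).const_mul c).add_const d
  exact (hnum.div hden hx).congr_deriv (by ring)

section Fcr

variable (α α₁ α₂ β β₁ β₂ x x₁ x₂ : ℂ)

def Fcr.den : ℂ := β * α₁ * (α₁ * x₁ - α₂ * x) + α * β₂ * (β₁ * x - β₂ * x₂)

variable {α α₁ α₂ β β₁ β₂ x x₁ x₂}

theorem hasDerivAt_Fcr_fst (h : Fcr.den α α₁ α₂ β β₁ β₂ x x₁ x₂ ≠ 0) :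
    HasDerivAt (fun t => Fcr α α₁ α₂ β β₁ β₂ t x₁ x₂)
      (α * β * (α₁ * β₁ * x₁ - α₂ * β₂ * x₂) ^ 2 / Fcr.den α α₁ α₂ β β₁ β₂ x x₁ x₂ ^ 2) x := by
  have hD : (α * β₁ * β₂ - β * α₁ * α₂) * x + (β * α₁ ^ 2 * x₁ - α * β₂ ^ 2 * x₂)
      = Fcr.den α α₁ α₂ β β₁ β₂ x x₁ x₂ := by unfold Fcr.den; ring
  refine (hasDerivAt_affine_div_affine (a := α * β₁ ^ 2 * x₁ - β * α₂ ^ 2 * x₂)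
    (b := (β * α₁ * α₂ - α * β₁ * β₂) * x₁ * x₂) (fun t => ?_) (hD ▸ h)).congr_deriv ?_
  · unfold Fcr; ring
  · rw [hD]; ring

theorem hasDerivAt_Fcr_snd (h : Fcr.den α α₁ α₂ β β₁ β₂ x x₁ x₂ ≠ 0) :
    HasDerivAt (fun t => Fcr α α₁ α₂ β β₁ β₂ x t x₂)
      (α * (α * β₁ * β₂ - β * α₁ * α₂) * (β₁ * x - β₂ * x₂) ^ 2 /
        Fcr.den α α₁ α₂ β β₁ β₂ x x₁ x₂ ^ 2) x₁ := by
  have hD : β * α₁ ^ 2 * x₁ + (-(β * α₁ * α₂ * x) + α * β₂ * (β₁ * x - β₂ * x₂))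
      = Fcr.den α α₁ α₂ β β₁ β₂ x x₁ x₂ := by unfold Fcr.den; ring
  refine (hasDerivAt_affine_div_affine (a := β * α₁ * α₂ * x₂ + α * β₁ * (β₁ * x - β₂ * x₂))
    (b := -(β * α₂ ^ 2 * x₂ * x)) (fun t => ?_) (hD ▸ h)).congr_deriv ?_
  · unfold Fcr; ring
  · rw [hD]; ring

theorem hasDerivAt_Fcr_thd (h : Fcr.den α α₁ α₂ β β₁ β₂ x x₁ x₂ ≠ 0) :
    HasDerivAt (fun t => Fcr α α₁ α₂ β β₁ β₂ x x₁ t)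
      (-(β * (α * β₁ * β₂ - β * α₁ * α₂) * (α₁ * x₁ - α₂ * x) ^ 2) /
        Fcr.den α α₁ α₂ β β₁ β₂ x x₁ x₂ ^ 2) x₂ := by
  have hD : -(α * β₂ ^ 2) * x₂ + (β * α₁ * (α₁ * x₁ - α₂ * x) + α * β₁ * β₂ * x)
      = Fcr.den α α₁ α₂ β β₁ β₂ x x₁ x₂ := by unfold Fcr.den; ring
  refine (hasDerivAt_affine_div_affine (a := β * α₂ * (α₁ * x₁ - α₂ * x) - α * β₁ * β₂ * x₁)
    (b := α * β₁ ^ 2 * x₁ * x) (fun t => ?_) (hD ▸ h)).congr_deriv ?_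
  · unfold Fcr; ring
  · rw [hD]; ring

theorem α₁_mul_Fcr_sub_α₂_mul (h : Fcr.den α α₁ α₂ β β₁ β₂ x x₁ x₂ ≠ 0) :
    α₁ * Fcr α α₁ α₂ β β₁ β₂ x x₁ x₂ - α₂ * x₂ =
      α * (β₁ * x - β₂ * x₂) * (α₁ * β₁ * x₁ - α₂ * β₂ * x₂) / Fcr.den α α₁ α₂ β β₁ β₂ x x₁ x₂ := by
  rw [Fcr, ← Fcr.den]
  field_simp
  unfold Fcr.den
  ring

theorem β₁_mul_sub_β₂_mul_Fcr (h : Fcr.den α α₁ α₂ β β₁ β₂ x x₁ x₂ ≠ 0) :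
    β₁ * x₁ - β₂ * Fcr α α₁ α₂ β β₁ β₂ x x₁ x₂ =
      β * (α₁ * x₁ - α₂ * x) * (α₁ * β₁ * x₁ - α₂ * β₂ * x₂) / Fcr.den α α₁ α₂ β β₁ β₂ x x₁ x₂ := by
  rw [Fcr, ← Fcr.den]
  field_simp
  unfold Fcr.den
  ring

end Fcr

/-- The lift of the multiparametric cross-ratio equation is a Poisson map with
respect to the bracket `{x₁,x₂} = −(α₁x₁−α₂x₂)²/α`, `{y₁,y₂} = −(β₁y₁−β₂y₂)²/β`,
`{xᵢ,yⱼ} = 0`. -/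
theorem multiparametric_crossratio_lift_Poisson (α α₁ α₂ β β₁ β₂ : ℂ)
    (hα : α ≠ 0) (hβ : β ≠ 0)
    (u₁ u₂ v₁ v₂ : ℂ → ℂ → ℂ → ℂ → ℂ)
    (hu₁ : u₁ = fun x₁ _ y₁ y₂ => Fcr α α₁ α₂ β β₁ β₂ y₁ x₁ y₂)
    (hu₂ : u₂ = fun _ _ _ y₂ => y₂)
    (hv₁ : v₁ = fun x₁ _ _ _ => x₁)
    (hv₂ : v₂ = fun x₁ x₂ _ y₂ => Fcr α α₁ α₂ β β₁ β₂ x₂ x₁ y₂)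
    (x₁ x₂ y₁ y₂ : ℂ)
    (hd₁ : β * α₁ * (α₁ * x₁ - α₂ * y₁) + α * β₂ * (β₁ * y₁ - β₂ * y₂) ≠ 0)
    (hd₂ : β * α₁ * (α₁ * x₁ - α₂ * x₂) + α * β₂ * (β₁ * x₂ - β₂ * y₂) ≠ 0) :
    pb α α₁ α₂ β β₁ β₂ u₁ u₂ x₁ x₂ y₁ y₂
      = -(α₁ * u₁ x₁ x₂ y₁ y₂ - α₂ * u₂ x₁ x₂ y₁ y₂) ^ 2 / α ∧
    pb α α₁ α₂ β β₁ β₂ v₁ v₂ x₁ x₂ y₁ y₂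
      = -(β₁ * v₁ x₁ x₂ y₁ y₂ - β₂ * v₂ x₁ x₂ y₁ y₂) ^ 2 / β ∧
    pb α α₁ α₂ β β₁ β₂ u₁ v₁ x₁ x₂ y₁ y₂ = 0 ∧
    pb α α₁ α₂ β β₁ β₂ u₁ v₂ x₁ x₂ y₁ y₂ = 0 ∧
    pb α α₁ α₂ β β₁ β₂ u₂ v₁ x₁ x₂ y₁ y₂ = 0 ∧
    pb α α₁ α₂ β β₁ β₂ u₂ v₂ x₁ x₂ y₁ y₂ = 0 := by
  subst hu₁ hu₂ hv₁ hv₂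
  have hP : Fcr.den α α₁ α₂ β β₁ β₂ y₁ x₁ y₂ ≠ 0 := hd₁
  have hQ : Fcr.den α α₁ α₂ β β₁ β₂ x₂ x₁ y₂ ≠ 0 := hd₂
  simp only [pb, d1, d2, d3, d4, (hasDerivAt_Fcr_fst hP).deriv, (hasDerivAt_Fcr_snd hP).deriv,
    (hasDerivAt_Fcr_fst hQ).deriv, (hasDerivAt_Fcr_thd hQ).deriv, deriv_const, deriv_id'',
    mul_zero, zero_mul, one_mul, sub_zero, zero_add, add_zero, true_and, and_true]
  refine ⟨?_, ?_, ?_⟩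
  · rw [α₁_mul_Fcr_sub_α₂_mul hP]
    field_simp
  · rw [β₁_mul_sub_β₂_mul_Fcr hQ]
    field_simp
  · field_simp
    ring
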